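/- arXiv:1507.05303 — 5 statements merged into one kernel-verified Lean document; each statement's English description precedes it below -/
import Mathlib

section
/- Let k be an algebraically closed field of prime characteristic p, and let X and Y be p×p matrices over k satisfying X*Y − Y*X = 1 (the identity matrix). Then X has a single Jordan block of size p, i.e. there exists λ ∈ k such that (X − λ•1)^p = 0 and (X − λ•1)^(p−1) ≠ 0; and likewise Y has a single Jordan block of size p. -/
open Polynomial

private lemma comm_pow_aux {R : Type*} [Ring R] (A B : R) (h : A * B - B * A = 1) :
    ∀ n : ℕ, A ^ n * B - B * A ^ n = n • A ^ (n - 1) := by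
  intro n
  induction n with
  | zero => simp
  | succ n ih =>
    have key : A ^ (n+1) * B - B * A ^ (n+1)
        = A * (A ^ n * B - B * A ^ n) + (A * B - B * A) * A ^ n := by
      rw [pow_succ']; noncomm_ring
    rw [key, ih, h, one_mul]
    cases n with
    | zero => simp
    | succ m =>
      simp only [Nat.add_sub_cancel]
      rw [mul_smul_comm, ← pow_succ', ← succ_nsmul]

private lemma comm_aeval_aux {R : Type*} [Ring R] {k : Type*} [Field k] [Algebra k R]
    (A B : R) (h : A * B - B * A = 1) (f : k[X]) :
    aeval A f * B - B * aeval A f = aeval A (derivative f) := by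
  induction f using Polynomial.induction_on' with
  | add p q hp hq =>
    simp only [map_add, add_mul, mul_add]
    rw [← hp, ← hq]; abel
  | monomial n a =>
    rw [aeval_monomial, derivative_monomial, aeval_monomial]
    have h1 : (algebraMap k R a) * A ^ n * B - B * ((algebraMap k R a) * A ^ n)
        = (algebraMap k R a) * (A ^ n * B - B * A ^ n) := by
      rw [mul_sub, mul_assoc, ← mul_assoc B, ← Algebra.commutes a B, mul_assoc]
    rw [h1, comm_pow_aux A B h n, map_mul, map_natCast, mul_assoc, nsmul_eq_mul]

private lemma single_block {p : ℕ} (hp : p.Prime) {k : Type*} [Field k] [IsAlgClosed k]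
    [CharP k p] (X Y : Matrix (Fin p) (Fin p) k) (h : X * Y - Y * X = 1) :
    ∃ lam : k, (X - lam • (1 : Matrix (Fin p) (Fin p) k)) ^ p = 0 ∧
        (X - lam • (1 : Matrix (Fin p) (Fin p) k)) ^ (p - 1) ≠ 0 := by
  have hppos : 0 < p := hp.pos
  haveI : Fact p.Prime := ⟨hp⟩
  haveI : NeZero p := ⟨hp.ne_zero⟩
  haveI : Nonempty (Fin p) := ⟨⟨0, hppos⟩⟩
  set m := minpoly k X with hm
  have hint : IsIntegral k X := Algebra.IsIntegral.isIntegral X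
  have hmonic : m.Monic := minpoly.monic hint
  have hdegpos : 0 < m.natDegree := minpoly.natDegree_pos hint
  -- m'(X) = 0
  have haeval : aeval X (derivative m) = 0 := by
    rw [← comm_aeval_aux X Y h m, minpoly.aeval, zero_mul, mul_zero, sub_zero]
  have hderiv : derivative m = 0 := by
    by_contra hne
    have hdvd : m ∣ derivative m := minpoly.dvd k X haeval
    have := Polynomial.natDegree_le_of_dvd hdvd hne
    have hlt := Polynomial.natDegree_derivative_lt (p := m) hdegpos.ne'
    omega
  -- m = expand p g
  have hexp : Polynomial.expand k p (Polynomial.contract p m) = m :=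
    Polynomial.expand_contract p hderiv hp.ne_zero
  set g := Polynomial.contract p m with hg
  have hdegm_le : m.natDegree ≤ p := by
    have h1 : m ∣ X.charpoly := minpoly.dvd k X (X.aeval_self_charpoly)
    have h2 := Polynomial.natDegree_le_of_dvd h1 X.charpoly_monic.ne_zero
    rwa [Matrix.charpoly_natDegree_eq_dim, Fintype.card_fin] at h2
  have hdegexp : m.natDegree = p * g.natDegree := by
    conv_lhs => rw [← hexp]
    rw [Polynomial.natDegree_expand, mul_comm]
  have hgdeg : g.natDegree = 1 := by nlinarith [hdegpos, hdegm_le, hdegexp]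
  have hdegm : m.natDegree = p := by rw [hdegexp, hgdeg, mul_one]
  -- g is monic
  have hgmonic : g.Monic := by
    have h1 := hmonic
    rw [Polynomial.Monic, Polynomial.leadingCoeff, hdegm, ← hexp,
      Polynomial.coeff_expand hppos] at h1
    rw [Polynomial.Monic, Polynomial.leadingCoeff, hgdeg]
    simpa [Nat.div_self hppos] using h1
  have hgeq : g = Polynomial.X + C (g.coeff 0) := hgmonic.eq_X_add_C hgdeg
  obtain ⟨lam, hlam⟩ : ∃ lam : k, lam ^ p = -(g.coeff 0) :=
    ⟨_, IsAlgClosed.exists_pow_nat_eq (-(g.coeff 0)) hppos |>.choose_spec⟩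
  have hmfactor : m = (Polynomial.X - C lam) ^ p := by
    rw [← hexp, hgeq]
    rw [map_add, Polynomial.expand_X, Polynomial.expand_C]
    rw [sub_pow_char]
    rw [← map_pow, hlam, map_neg, sub_neg_eq_add]
  have haevalfac : ∀ n : ℕ, aeval X ((Polynomial.X - C lam) ^ n)
      = (X - lam • (1 : Matrix (Fin p) (Fin p) k)) ^ n := by
    intro n
    rw [map_pow, map_sub, aeval_X, aeval_C, Algebra.algebraMap_eq_smul_one]
  refine ⟨lam, ?_, ?_⟩
  · rw [← haevalfac, ← hmfactor, minpoly.aeval]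
  · intro hzero
    have : m ∣ (Polynomial.X - C lam) ^ (p - 1) := by
      apply minpoly.dvd
      rw [haevalfac, hzero]
    have hne : ((Polynomial.X - C lam) ^ (p - 1) : k[X]) ≠ 0 :=
      ((Polynomial.monic_X_sub_C lam).pow _).ne_zero
    have hle := Polynomial.natDegree_le_of_dvd this hne
    rw [Polynomial.natDegree_pow, Polynomial.natDegree_X_sub_C, hdegm] at hle
    omega

/-- If `X * Y - Y * X = 1` for `p × p` matrices over an algebraically closed field of
characteristic `p > 0`, then both `X` and `Y` have a single Jordan block of size `p`. -/
theorem commutator_eq_one_single_jordan_block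
    (p : ℕ) (hp : p.Prime) (k : Type*) [Field k] [IsAlgClosed k] [CharP k p]
    (X Y : Matrix (Fin p) (Fin p) k) (h : X * Y - Y * X = 1) :
    (∃ lam : k, (X - lam • (1 : Matrix (Fin p) (Fin p) k)) ^ p = 0 ∧
        (X - lam • (1 : Matrix (Fin p) (Fin p) k)) ^ (p - 1) ≠ 0) ∧
    (∃ lam : k, (Y - lam • (1 : Matrix (Fin p) (Fin p) k)) ^ p = 0 ∧
        (Y - lam • (1 : Matrix (Fin p) (Fin p) k)) ^ (p - 1) ≠ 0) := by
  refine ⟨single_block hp X Y h, ?_⟩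
  have h' : Y * (-X) - (-X) * Y = 1 := by
    rw [← h]; noncomm_ring
  exact single_block hp Y (-X) h'
end

section
/- Let k be an algebraically closed field of prime characteristic p and let X be a p×p matrix over k. Then the k-subspace {Y ∈ M_p(k) : there exists c ∈ k with X*Y − Y*X = c•1} of M_p(k) has k-dimension p + 1 if and only if X has a single Jordan block of size p, i.e. there exists λ ∈ k such that (X − λ•1)^p = 0 and (X − λ•1)^(p−1) ≠ 0. -/
/-!
The space `{Y | ∃ c, [X, Y] = c • 1}` is the preimage of the line `k ∙ 1` under `ad X`, so its
dimension is `dim ker (ad X)`, plus one if `1` is a commutator `[X, A]`.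

The form `(Y, Z) ↦ tr ([X, Y] Z)` is alternating with kernel `ker (ad X)`, so
`p² + dim ker (ad X)` is even; hence dimension `p + 1` forces some `[X, A] = 1`. Then
`[f(X), A] = f'(X)` for every polynomial `f`, so the minimal polynomial of `X` has zero derivative;
having degree at most `p`, it is `(T - λ)^p`.

Conversely, if `N = X - λ` is nilpotent of index `p`, a cyclic vector shows that `ker (ad N)` is
spanned by `1, N, …, N^(p-1)`, so it has dimension `p` and, in characteristic `p`, consists of
matrices of trace zero. As the trace form identifies `range (ad N)` with the orthogonal of
`ker (ad N)`, the identity is a commutator.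
-/

/-- For a `p × p` matrix `X`, the subspace of matrices `Y` with `X*Y - Y*X` a scalar
multiple of the identity. -/
def scalarCommutatorSubspace (p : ℕ) (k : Type*) [Field k]
    (X : Matrix (Fin p) (Fin p) k) : Submodule k (Matrix (Fin p) (Fin p) k) where
  carrier := {Y | ∃ c : k, X * Y - Y * X = c • (1 : Matrix (Fin p) (Fin p) k)}
  zero_mem' := ⟨0, by simp⟩
  add_mem' := by
    rintro Y Z ⟨c, hc⟩ ⟨d, hd⟩
    exact ⟨c + d, by rw [mul_add, add_mul, add_smul, ← hc, ← hd]; abel⟩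
  smul_mem' := by
    rintro a Y ⟨c, hc⟩
    exact ⟨a * c, by rw [mul_smul_comm, smul_mul_assoc, ← smul_sub, hc, smul_smul]⟩

open Module

attribute [local instance] LieRing.ofAssociativeRing

namespace LinearMap.BilinForm

variable {K V : Type*} [Field K] [AddCommGroup V] [Module K V] {B : LinearMap.BilinForm K V}

theorem IsAlt.eq_zero_of_apply_smul_add_smul {x y : V} (hB : B.IsAlt) (hxy : B x y ≠ 0)
    {a b : K} (hx : B x (a • x + b • y) = 0) (hy : B y (a • x + b • y) = 0) :
    a = 0 ∧ b = 0 := by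
  have hyx : B y x = -B x y := (hB.neg_eq x y).symm
  simp only [map_add, map_smul, smul_eq_mul, hB.self_eq_zero, hyx] at hx hy
  exact ⟨by simpa [hxy] using hy, by simpa [hxy] using hx⟩

theorem IsAlt.finrank_span_pair {x y : V} (hB : B.IsAlt) (hxy : B x y ≠ 0) :
    finrank K (Submodule.span K {x, y}) = 2 := by
  have hli : LinearIndependent K ![x, y] := LinearIndependent.pair_iff.mpr fun a b h =>
    hB.eq_zero_of_apply_smul_add_smul hxy (by simp [h]) (by simp [h])
  rw [← Matrix.range_cons_cons_empty x y ![]]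
  exact (finrank_span_eq_card hli).trans (Fintype.card_fin 2)

theorem IsAlt.isCompl_span_pair_orthogonal [FiniteDimensional K V] {x y : V} (hB : B.IsAlt)
    (hxy : B x y ≠ 0) :
    IsCompl (Submodule.span K {x, y}) (B.orthogonal (Submodule.span K {x, y})) := by
  refine (isCompl_orthogonal_iff_disjoint hB.isRefl).mpr (Submodule.disjoint_def.mpr ?_)
  rintro z hz hzo
  obtain ⟨a, b, rfl⟩ := Submodule.mem_span_pair.mp hz
  obtain ⟨rfl, rfl⟩ := hB.eq_zero_of_apply_smul_add_smul hxy
    (hzo x (Submodule.subset_span (by simp))) (hzo y (Submodule.subset_span (by simp)))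
  simp

/-- Splitting off a hyperbolic plane `span {x, y}` lowers the dimension by two and keeps the
kernel. -/
theorem IsAlt.even_finrank_add_finrank_ker [FiniteDimensional K V] (hB : B.IsAlt) :
    Even (finrank K V + finrank K (LinearMap.ker B)) := by
  induction hn : finrank K V using Nat.strong_induction_on generalizing V with
  | _ n ih =>
  by_cases hB0 : B = 0
  · subst hB0
    rw [LinearMap.ker_zero, finrank_top, hn]
    exact ⟨n, rfl⟩
  obtain ⟨x, y, hxy⟩ : ∃ x y, B x y ≠ 0 := by
    by_contra! h
    exact hB0 (LinearMap.ext₂ h)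
  set Q := B.orthogonal (Submodule.span K {x, y})
  have hcompl := hB.isCompl_span_pair_orthogonal hxy
  have hdim : 2 + finrank K Q = n := by
    rw [← hB.finrank_span_pair hxy, ← hn, Submodule.finrank_add_eq_of_isCompl hcompl]
  have hker : LinearMap.ker (B.restrict Q) = (LinearMap.ker B).comap Q.subtype :=
    ker_restrict_eq_of_codisjoint hcompl.codisjoint.symm fun z hz w hw => hB.isRefl _ _ (hz w hw)
  have hker_le : LinearMap.ker B ≤ Q := fun z hz w _ =>
    hB.isRefl _ _ (by simp [LinearMap.mem_ker.mp hz])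
  have hQ := ih _ (by omega) (B := B.restrict Q) (fun z => hB z) rfl
  rw [hker, (Submodule.comapSubtypeEquivOfLe hker_le).finrank_eq] at hQ
  rw [← hdim, add_assoc]
  exact even_two.add hQ

end LinearMap.BilinForm

theorem LinearMap.finrank_comap_eq_finrank_ker_add {K V W : Type*} [Field K] [AddCommGroup V]
    [Module K V] [AddCommGroup W] [Module K W] [FiniteDimensional K V] (f : V →ₗ[K] W)
    (U : Submodule K W) :
    finrank K (U.comap f) = finrank K (ker f) + finrank K (range f ⊓ U : Submodule K W) := by
  rw [← finrank_range_add_finrank_ker (f.domRestrict (U.comap f)), add_comm, range_domRestrict,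
    Submodule.map_comap_eq, ker_domRestrict,
    (Submodule.comapSubtypeEquivOfLe (ker_le_comap f)).finrank_eq]

theorem Submodule.finrank_inf_span_singleton {K V : Type*} [Field K] [AddCommGroup V]
    [Module K V] (W : Submodule K V) {x : V} (hx : x ≠ 0) [Decidable (x ∈ W)] :
    finrank K (W ⊓ K ∙ x : Submodule K V) = if x ∈ W then 1 else 0 := by
  split_ifs with h
  · rw [inf_eq_right.mpr ((span_singleton_le_iff_mem x W).mpr h), finrank_span_singleton hx]
  · rw [(disjoint_span_singleton.mpr fun h' => absurd h' h).eq_bot, finrank_bot]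

section Polynomial

open Polynomial

theorem lie_aeval_eq_aeval_derivative {R S : Type*} [CommRing R] [Ring S] [Algebra R S]
    {x a : S} (h : ⁅x, a⁆ = 1) (f : R[X]) : ⁅aeval x f, a⁆ = aeval x (derivative f) := by
  induction f using Polynomial.induction_on with
  | C c => simp [Ring.lie_def, Algebra.commutes]
  | add f g hf hg => simp [add_lie, hf, hg]
  | monomial n c ih =>
    have hleibniz (u : S) : ⁅u * x, a⁆ = u * ⁅x, a⁆ + ⁅u, a⁆ * x := by
      simp only [Ring.lie_def]
      noncomm_ring
    rw [pow_succ, ← mul_assoc, map_mul, aeval_X, hleibniz, ih, h]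
    conv_rhs => rw [derivative_mul, derivative_X]
    simp [add_comm]

theorem derivative_minpoly_eq_zero {K S : Type*} [Field K] [Ring S] [Nontrivial S] [Algebra K S]
    {x a : S} (hx : IsIntegral K x) (h : ⁅x, a⁆ = 1) : derivative (minpoly K x) = 0 := by
  by_contra hne
  have hdvd : minpoly K x ∣ derivative (minpoly K x) := minpoly.dvd K x <| by
    rw [← lie_aeval_eq_aeval_derivative h, minpoly.aeval, zero_lie]
  have := natDegree_le_of_dvd hdvd hne
  have := natDegree_derivative_lt (minpoly.natDegree_pos hx).ne'
  omega

/-- Zero derivative makes `f` a polynomial in `X ^ p`, so here `f = X ^ p + b = (X - c) ^ p` with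
`c ^ p = -b`. -/
theorem Polynomial.exists_eq_X_sub_C_pow_of_derivative_eq_zero {K : Type*} [Field K]
    [IsAlgClosed K] {p : ℕ} [hp : Fact p.Prime] [CharP K p] {f : K[X]} (hf : f.Monic)
    (hpos : 0 < f.natDegree) (hle : f.natDegree ≤ p) (hf' : derivative f = 0) :
    ∃ c, f = (X - C c) ^ p := by
  have hexpand : expand K p (contract p f) = f := expand_contract p hf' hp.out.ne_zero
  have hdeg : (contract p f).natDegree = 1 := by
    have := hp.out.pos
    rw [← hexpand, natDegree_expand] at hpos hle
    rcases Nat.lt_or_ge (contract p f).natDegree 2 with h | h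
    · interval_cases (contract p f).natDegree <;> simp_all
    · nlinarith
  have hmonic : (contract p f).Monic := (monic_expand_iff hp.out.pos).mp (by rwa [hexpand])
  obtain ⟨c, hc⟩ := IsAlgClosed.exists_pow_nat_eq (-(contract p f).coeff 0) hp.out.pos
  refine ⟨c, ?_⟩
  rw [← hexpand, hmonic.eq_X_add_C hdeg, sub_pow_char, map_add, expand_X, expand_C, ← C_pow, hc,
    map_neg, sub_neg_eq_add]

end Polynomial

namespace Matrix

variable {ι K : Type*} [Fintype ι] [DecidableEq ι] [Field K]

section Commutator

open Polynomial in
theorem exists_single_jordan_block_of_lie_eq_one [IsAlgClosed K] {p : ℕ} [Fact p.Prime]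
    [CharP K p] (hι : Fintype.card ι = p) {M A : Matrix ι ι K} (h : ⁅M, A⁆ = 1) :
    ∃ c : K, (M - c • 1) ^ p = 0 ∧ (M - c • 1) ^ (p - 1) ≠ 0 := by
  have hp := (Fact.out : p.Prime).pos
  have : Nonempty ι := Fintype.card_pos_iff.mp (hι ▸ hp)
  have hdeg : (minpoly K M).natDegree ≤ p := hι ▸ M.charpoly_natDegree_eq_dim ▸
    natDegree_le_of_dvd M.minpoly_dvd_charpoly M.charpoly_monic.ne_zero
  obtain ⟨c, hc⟩ := exists_eq_X_sub_C_pow_of_derivative_eq_zero (minpoly.monic M.isIntegral)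
    (minpoly.natDegree_pos M.isIntegral) hdeg (derivative_minpoly_eq_zero M.isIntegral h)
  have haeval (j : ℕ) : aeval M ((X - C c) ^ j) = (M - c • 1) ^ j := by
    simp [Algebra.algebraMap_eq_smul_one]
  refine ⟨c, by rw [← haeval, ← hc, minpoly.aeval], fun h0 => ?_⟩
  have := natDegree_le_of_dvd (minpoly.dvd K M (by rw [haeval, h0]))
    ((monic_X_sub_C c).pow _).ne_zero
  rw [hc, natDegree_pow, natDegree_pow, natDegree_X_sub_C] at this
  omega

theorem ad_sub_smul_one (X : Matrix ι ι K) (c : K) :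
    LieAlgebra.ad K _ (X - c • 1) = LieAlgebra.ad K _ X := by
  ext1 Y
  simp [Ring.lie_def]

end Commutator

section TraceForm

def traceMulForm : LinearMap.BilinForm K (Matrix ι ι K) :=
  (LinearMap.mul K _).compr₂ (traceLinearMap ι K K)

theorem traceMulForm_apply (Y Z : Matrix ι ι K) : traceMulForm Y Z = trace (Y * Z) := rfl

theorem traceMulForm_nondegenerate :
    (traceMulForm : LinearMap.BilinForm K (Matrix ι ι K)).Nondegenerate := by
  have hrefl : (traceMulForm : LinearMap.BilinForm K (Matrix ι ι K)).IsRefl := fun Y Z h => by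
    rwa [traceMulForm_apply, trace_mul_comm]
  refine (LinearMap.IsRefl.nondegenerate_iff_separatingLeft hrefl).mpr fun Y hY => ?_
  ext i j
  simpa [traceMulForm_apply, trace_mul_single] using hY (single j i 1)

theorem isAlt_traceMulForm_comp_ad (X : Matrix ι ι K) :
    LinearMap.BilinForm.IsAlt (traceMulForm ∘ₗ LieAlgebra.ad K _ X) := fun Y => by
  simp only [LinearMap.comp_apply, LieAlgebra.ad_apply, Ring.lie_def, traceMulForm_apply, sub_mul,
    trace_sub, mul_assoc, trace_mul_comm Y (X * Y), sub_self]

theorem ker_traceMulForm_comp_ad (X : Matrix ι ι K) :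
    LinearMap.ker (traceMulForm ∘ₗ LieAlgebra.ad K _ X) = LinearMap.ker (LieAlgebra.ad K _ X) :=
  LinearMap.ker_comp_of_ker_eq_bot _ traceMulForm_nondegenerate.ker_eq_bot

theorem even_finrank_add_finrank_ker_ad (X : Matrix ι ι K) :
    Even (finrank K (Matrix ι ι K) + finrank K (LinearMap.ker (LieAlgebra.ad K _ X))) :=
  ker_traceMulForm_comp_ad X ▸ (isAlt_traceMulForm_comp_ad X).even_finrank_add_finrank_ker

theorem range_ad_eq_orthogonal_ker_ad (X : Matrix ι ι K) :
    LinearMap.range (LieAlgebra.ad K _ X) =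
      traceMulForm.orthogonal (LinearMap.ker (LieAlgebra.ad K _ X)) := by
  refine Submodule.eq_of_le_of_finrank_eq ?_ ?_
  · rintro _ ⟨Y, rfl⟩ Z hZ
    have hXZ : X * Z = Z * X := by
      simpa [sub_eq_zero, Ring.lie_def] using LinearMap.mem_ker.mp hZ
    rw [traceMulForm_apply, LieAlgebra.ad_apply, Ring.lie_def, mul_sub, trace_sub, ← mul_assoc,
      ← hXZ, mul_assoc, trace_mul_comm X, mul_assoc, sub_self]
  · rw [LinearMap.BilinForm.finrank_orthogonal traceMulForm_nondegenerate,
      ← LinearMap.finrank_range_add_finrank_ker (LieAlgebra.ad K _ X), Nat.add_sub_cancel]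

theorem one_mem_range_ad_iff (X : Matrix ι ι K) :
    1 ∈ LinearMap.range (LieAlgebra.ad K _ X) ↔
      ∀ Z ∈ LinearMap.ker (LieAlgebra.ad K _ X), trace Z = 0 := by
  simp [range_ad_eq_orthogonal_ker_ad, LinearMap.BilinForm.mem_orthogonal_iff, traceMulForm_apply]

end TraceForm

section Nilpotent

theorem exists_mulVec_ne_zero {m n : Type*} [Fintype n] {M : Matrix m n K} (hM : M ≠ 0) :
    ∃ v, M *ᵥ v ≠ 0 := by
  by_contra! h
  exact hM (ext_iff_mulVec.mpr fun v => by rw [h, zero_mulVec])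

theorem linearIndependent_pow_mulVec {N : Matrix ι ι K} {v : ι → K} {m : ℕ}
    (hv : N ^ (m - 1) *ᵥ v ≠ 0) (hm : N ^ m *ᵥ v = 0) :
    LinearIndependent K fun i : Fin m => N ^ (i : ℕ) *ᵥ v := by
  have hvanish (j : ℕ) (hj : m ≤ j) : N ^ j *ᵥ v = 0 := by
    rw [← Nat.sub_add_cancel hj, pow_add, ← mulVec_mulVec, hm, mulVec_zero]
  rw [Fintype.linearIndependent_iff]
  intro g hg
  suffices ∀ j (hj : j < m), g ⟨j, hj⟩ = 0 from fun i => this i i.isLt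
  intro j
  induction j using Nat.strong_induction_on with
  | _ j ih =>
  intro hj
  -- `N ^ (m - 1 - j)` kills the terms after the `j`-th, and those before it vanish by induction
  have happ := congrArg (N ^ (m - 1 - j) *ᵥ ·) hg
  simp only [mulVec_sum, mulVec_smul, mulVec_mulVec, ← pow_add, mulVec_zero] at happ
  rw [Finset.sum_eq_single ⟨j, hj⟩ (fun i _ hi => ?_) (by simp)] at happ
  · rw [show m - 1 - j + j = m - 1 by omega] at happ
    exact (smul_eq_zero.mp happ).resolve_right hv
  · rcases lt_or_gt_of_ne (fun h => hi (Fin.ext h) : (i : ℕ) ≠ j) with hlt | hgt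
    · rw [ih i hlt i.isLt, zero_smul]
    · rw [hvanish _ (by omega), smul_zero]

theorem linearIndependent_pow {N : Matrix ι ι K} {m : ℕ} (hN : N ^ m = 0)
    (hN' : N ^ (m - 1) ≠ 0) : LinearIndependent K fun i : Fin m => N ^ (i : ℕ) := by
  obtain ⟨v, hv⟩ := exists_mulVec_ne_zero hN'
  exact (linearIndependent_pow_mulVec hv (by rw [hN, zero_mulVec])).of_comp
    ((mulVecBilin K K).flip v)

variable {N : Matrix ι ι K} (hN : N ^ Fintype.card ι = 0) (hN' : N ^ (Fintype.card ι - 1) ≠ 0)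
include hN hN'

theorem ker_ad_eq_span_pow :
    LinearMap.ker (LieAlgebra.ad K _ N) =
      Submodule.span K (Set.range fun i : Fin (Fintype.card ι) => N ^ (i : ℕ)) := by
  obtain ⟨v, hv⟩ := exists_mulVec_ne_zero hN'
  have : Nonempty (Fin (Fintype.card ι)) :=
    Fin.pos_iff_nonempty.mp (Nat.pos_of_ne_zero fun h => hN' (by simpa [h] using hN))
  have hspan := (linearIndependent_pow_mulVec hv (by rw [hN, zero_mulVec]))
    |>.span_eq_top_of_card_eq_finrank (by simp)
  have hcyclic (Y : Matrix ι ι K) (hY : Commute N Y) (hYv : Y *ᵥ v = 0) : Y = 0 :=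
    toLin'.injective <| LinearMap.ext_on_range hspan fun i => by
      rw [toLin'_apply, mulVec_mulVec, ← (hY.pow_left i).eq, ← mulVec_mulVec, hYv, mulVec_zero,
        map_zero, LinearMap.zero_apply]
  refine le_antisymm (fun Y hY => ?_) (Submodule.span_le.mpr ?_)
  · obtain ⟨c, hc⟩ := (Submodule.mem_span_range_iff_exists_fun K).mp
      (hspan ▸ Submodule.mem_top : Y *ᵥ v ∈ _)
    refine (Submodule.mem_span_range_iff_exists_fun K).mpr
      ⟨c, (sub_eq_zero.mp (hcyclic _ ?_ ?_)).symm⟩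
    · exact (commute_iff_lie_eq.mpr hY).sub_right
        (Commute.sum_right _ _ _ fun i _ => ((Commute.refl N).pow_right _).smul_right _)
    · simp [sub_mulVec, sum_mulVec, smul_mulVec, hc]
  · rintro _ ⟨i, rfl⟩
    exact ((Commute.refl N).pow_right _).lie_eq

theorem finrank_ker_ad_of_pow_eq_zero :
    finrank K (LinearMap.ker (LieAlgebra.ad K _ N)) = Fintype.card ι := by
  rw [ker_ad_eq_span_pow hN hN', finrank_span_eq_card (linearIndependent_pow hN hN'),
    Fintype.card_fin]

theorem one_mem_range_ad_of_pow_eq_zero (hι : (Fintype.card ι : K) = 0) :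
    1 ∈ LinearMap.range (LieAlgebra.ad K _ N) := by
  have htrace (j : ℕ) : trace (N ^ j) = 0 := by
    rcases j.eq_zero_or_pos with rfl | hj
    · rwa [pow_zero, trace_one]
    · exact (isNilpotent_trace_of_isNilpotent
        ((show IsNilpotent N from ⟨_, hN⟩).pow_of_pos hj.ne')).eq_zero
  rw [one_mem_range_ad_iff, ker_ad_eq_span_pow hN hN']
  have hle : Submodule.span K (Set.range fun i : Fin (Fintype.card ι) => N ^ (i : ℕ)) ≤
      LinearMap.ker (traceLinearMap ι K K) :=
    Submodule.span_le.mpr fun _ ⟨j, hj⟩ => hj ▸ htrace j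
  exact fun Z hZ => hle hZ

end Nilpotent

end Matrix

section

variable {K : Type*} [Field K] {n : ℕ}

theorem scalarCommutatorSubspace_eq_comap (X : Matrix (Fin n) (Fin n) K) :
    scalarCommutatorSubspace n K X = (K ∙ 1).comap (LieAlgebra.ad K _ X) := by
  ext Y
  simp [scalarCommutatorSubspace, Submodule.mem_span_singleton, Ring.lie_def, eq_comm]

theorem finrank_scalarCommutatorSubspace [NeZero n] (X : Matrix (Fin n) (Fin n) K)
    [Decidable (1 ∈ LinearMap.range (LieAlgebra.ad K _ X))] :
    finrank K (scalarCommutatorSubspace n K X) =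
      finrank K (LinearMap.ker (LieAlgebra.ad K _ X)) +
        if 1 ∈ LinearMap.range (LieAlgebra.ad K _ X) then 1 else 0 := by
  rw [scalarCommutatorSubspace_eq_comap, LinearMap.finrank_comap_eq_finrank_ker_add,
    Submodule.finrank_inf_span_singleton _ one_ne_zero]

end

/-- Over an algebraically closed field of characteristic `p > 0`, the space
`{Y : ∃ c, X*Y - Y*X = c•1}` has dimension `p + 1` if and only if `X` has a single Jordan
block of size `p`. -/
theorem finrank_scalarCommutatorSubspace_eq_iff_single_jordan_block
    (p : ℕ) (hp : p.Prime) (k : Type*) [Field k] [IsAlgClosed k] [CharP k p]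
    (X : Matrix (Fin p) (Fin p) k) :
    Module.finrank k (scalarCommutatorSubspace p k X) = p + 1 ↔
      ∃ lam : k, (X - lam • (1 : Matrix (Fin p) (Fin p) k)) ^ p = 0 ∧
        (X - lam • (1 : Matrix (Fin p) (Fin p) k)) ^ (p - 1) ≠ 0 := by
  have : Fact p.Prime := ⟨hp⟩
  have : NeZero p := ⟨hp.ne_zero⟩
  classical
  rw [finrank_scalarCommutatorSubspace]
  constructor
  · intro hdim
    by_cases h1 : 1 ∈ LinearMap.range (LieAlgebra.ad k _ X)
    · obtain ⟨A, hA⟩ := h1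
      exact Matrix.exists_single_jordan_block_of_lie_eq_one (Fintype.card_fin p) hA
    · have hparity := X.even_finrank_add_finrank_ker_ad
      rw [if_neg h1, add_zero] at hdim
      rw [hdim, finrank_matrix, Fintype.card_fin, finrank_self, mul_one,
        show p * p + (p + 1) = p * (p + 1) + 1 by ring] at hparity
      exact absurd hparity (Nat.not_even_iff_odd.mpr (Nat.even_mul_succ_self p).add_one)
  · rintro ⟨c, hN, hN'⟩
    have hpow : (X - c • 1) ^ Fintype.card (Fin p) = 0 := by rwa [Fintype.card_fin]
    have hpow' : (X - c • 1) ^ (Fintype.card (Fin p) - 1) ≠ 0 := by rwa [Fintype.card_fin]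
    rw [← Matrix.ad_sub_smul_one X c, Matrix.finrank_ker_ad_of_pow_eq_zero hpow hpow',
      if_pos (Matrix.one_mem_range_ad_of_pow_eq_zero hpow hpow' (by simp)), Fintype.card_fin]
end

section
/- Let k be a field, n ≥ 1, and let X be an n×n matrix over k whose minimal polynomial has degree n. Then every n×n matrix Y over k with X*Y = Y*X is a polynomial in X, i.e. Y = q(X) for some polynomial q ∈ k[T]. Consequently the commutant {Y ∈ M_n(k) : X*Y = Y*X} is a commutative k-subalgebra of M_n(k) of dimension n. -/
/-!
Make `kⁿ` a `k[T]`-module with `T` acting by `X`. Since `k[T]` is a principal ideal domain, some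
vector `v` has the same annihilator as the whole module, namely `(minpoly X)`. So `q ↦ q(X) v`
embeds `k[X] ≅ k[T] ⧸ (minpoly X)`, of dimension `deg (minpoly X) = n`, into `kⁿ`: it is onto,
i.e. `v` is a cyclic vector. If `Y` commutes with `X` and `Y v = q(X) v`, then `Y` and `q(X)` agree
on every `p(X) v`, so `Y = q(X)`. Thus the commutant of `X` is `k[X]`, commutative of dimension `n`.
-/

open Polynomial Module

theorem finrank_adjoin_singleton_eq_natDegree_minpoly {k A : Type*} [Field k] [Ring A]
    [Algebra k A] (x : A) :
    finrank k (Algebra.adjoin k {x}) = (minpoly k x).natDegree := by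
  rw [Algebra.adjoin_singleton_eq_range_aeval, ← finrank_quotient_span_eq_natDegree]
  exact ((Ideal.quotientEquivAlgOfEq k (minpoly.ker_aeval_eq_span_minpoly k x)).symm.trans
    (Ideal.quotientKerEquivRange (aeval (R := k) x))).toLinearEquiv.finrank_eq.symm

theorem Algebra.adjoin_singleton_le_centralizer_singleton {k A : Type*} [CommSemiring k]
    [Semiring A] [Algebra k A] (x : A) :
    Algebra.adjoin k {x} ≤ Subalgebra.centralizer k {x} := by
  intro a ha
  rw [Subalgebra.mem_centralizer_iff k]
  rintro _ rfl
  exact (Algebra.commute_of_mem_adjoin_self ha).eq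

namespace Module.End

variable {k V : Type*} [Field k] [AddCommGroup V] [Module k V]

def IsCyclicVector (f : Module.End k V) (v : V) : Prop :=
  ∀ w : V, ∃ p : k[X], aeval f p v = w

theorem IsCyclicVector.mem_adjoin_of_commute {f L : Module.End k V} {v : V}
    (hv : f.IsCyclicVector v) (hL : Commute f L) : L ∈ Algebra.adjoin k {f} := by
  obtain ⟨q, hq⟩ := hv (L v)
  suffices L = aeval f q from this ▸ aeval_mem_adjoin_singleton k f
  ext w
  obtain ⟨p, rfl⟩ := hv w
  have hLp : Commute L (aeval f p) :=
    Algebra.commute_of_mem_adjoin_singleton_of_commute (aeval_mem_adjoin_singleton k f) hL.symm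
  calc L (aeval f p v) = aeval f p (L v) := congr($hLp.eq v)
    _ = aeval f p (aeval f q v) := by rw [hq]
    _ = aeval f q (aeval f p v) := by
      rw [← mul_apply, ← map_mul, mul_comm, map_mul, mul_apply]

variable [FiniteDimensional k V]

theorem exists_forall_aeval_apply_eq_zero_iff (f : Module.End k V) :
    ∃ v : V, ∀ p : k[X], aeval f p v = 0 ↔ aeval f p = 0 := by
  obtain ⟨x, hx⟩ := exists_ker_toSpanSingleton_eq_annihilator k[X] (AEval' f)
  obtain ⟨v, rfl⟩ := (AEval'.of f).surjective x
  refine ⟨v, fun p => ?_⟩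
  have := SetLike.ext_iff.mp hx p
  rwa [← span_minpoly_eq_annihilator, Ideal.mem_span_singleton, minpoly.dvd_iff,
    LinearMap.mem_ker, LinearMap.toSpanSingleton_apply, ← AEval.of_aeval_smul,
    LinearEquiv.map_eq_zero_iff] at this

theorem exists_isCyclicVector_of_natDegree_minpoly_eq_finrank (f : Module.End k V)
    (hf : (minpoly k f).natDegree = finrank k V) : ∃ v : V, f.IsCyclicVector v := by
  obtain ⟨v, hv⟩ := exists_forall_aeval_apply_eq_zero_iff f
  let eval : Algebra.adjoin k {f} →ₗ[k] V :=
    LinearMap.applyₗ v ∘ₗ (Algebra.adjoin k {f}).val.toLinearMap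
  have eval_injective : Function.Injective eval := by
    refine (injective_iff_map_eq_zero eval).mpr fun ⟨a, ha⟩ h => ?_
    rw [Algebra.adjoin_singleton_eq_range_aeval] at ha
    obtain ⟨p, rfl⟩ := ha
    exact Subtype.ext ((hv p).mp h)
  have eval_surjective : Function.Surjective eval :=
    (LinearMap.injective_iff_surjective_of_finrank_eq_finrank
      (by rw [finrank_adjoin_singleton_eq_natDegree_minpoly, hf])).mp eval_injective
  refine ⟨v, fun w => ?_⟩
  obtain ⟨⟨a, ha⟩, rfl⟩ := eval_surjective w
  rw [Algebra.adjoin_singleton_eq_range_aeval] at ha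
  obtain ⟨p, rfl⟩ := ha
  exact ⟨p, rfl⟩

theorem centralizer_singleton_eq_adjoin_of_natDegree_minpoly_eq_finrank (f : Module.End k V)
    (hf : (minpoly k f).natDegree = finrank k V) :
    Subalgebra.centralizer k {f} = Algebra.adjoin k {f} := by
  obtain ⟨v, hv⟩ := exists_isCyclicVector_of_natDegree_minpoly_eq_finrank f hf
  refine le_antisymm (fun L hL => hv.mem_adjoin_of_commute ?_)
    (Algebra.adjoin_singleton_le_centralizer_singleton f)
  exact (Subalgebra.mem_centralizer_iff k).mp hL f rfl

end Module.End

theorem Matrix.centralizer_singleton_eq_adjoin_of_natDegree_minpoly_eq_card {k n : Type*}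
    [Field k] [Fintype n] [DecidableEq n] (X : Matrix n n k)
    (hX : (minpoly k X).natDegree = Fintype.card n) :
    Subalgebra.centralizer k {X} = Algebra.adjoin k {X} := by
  let e := Matrix.toLinAlgEquiv' (R := k) (n := n)
  have hcent := Module.End.centralizer_singleton_eq_adjoin_of_natDegree_minpoly_eq_finrank (e X)
    (by rw [minpoly.algEquiv_eq, finrank_fintype_fun_eq_card, hX])
  refine le_antisymm (fun Y hY => ?_) (Algebra.adjoin_singleton_le_centralizer_singleton X)
  have heY : e Y ∈ (Algebra.adjoin k {X}).map (e : Matrix n n k →ₐ[k] Module.End k (n → k)) := by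
    rw [AlgHom.map_adjoin_singleton]
    change e Y ∈ Algebra.adjoin k {e X}
    rw [← hcent, Subalgebra.mem_centralizer_iff k]
    rintro _ rfl
    rw [← map_mul, ← map_mul, (Subalgebra.mem_centralizer_iff k).mp hY X rfl]
  obtain ⟨Z, hZ, hZY⟩ := heY
  exact e.injective hZY ▸ hZ

theorem commutant_of_minpoly_natDegree_eq_general
    (k : Type*) [Field k] (n : ℕ)
    (X : Matrix (Fin n) (Fin n) k) (hmin : (minpoly k X).natDegree = n) :
    (∀ Y : Matrix (Fin n) (Fin n) k, X * Y = Y * X →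
      ∃ q : Polynomial k, Y = Polynomial.aeval X q) ∧
    (∀ Y ∈ Subalgebra.centralizer k ({X} : Set (Matrix (Fin n) (Fin n) k)),
      ∀ Z ∈ Subalgebra.centralizer k ({X} : Set (Matrix (Fin n) (Fin n) k)), Y * Z = Z * Y) ∧
    Module.finrank k (Subalgebra.centralizer k ({X} : Set (Matrix (Fin n) (Fin n) k))) = n := by
  have hcent := Matrix.centralizer_singleton_eq_adjoin_of_natDegree_minpoly_eq_card X
    (by rw [hmin, Fintype.card_fin])
  refine ⟨fun Y hY => ?_, fun Y hY Z hZ => ?_, ?_⟩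
  · have hYX : Y ∈ Algebra.adjoin k {X} := by
      rw [← hcent, Subalgebra.mem_centralizer_iff k]
      rintro _ rfl
      exact hY
    rw [Algebra.adjoin_singleton_eq_range_aeval] at hYX
    obtain ⟨q, rfl⟩ := hYX
    exact ⟨q, rfl⟩
  · rw [hcent] at hY hZ
    exact (Algebra.commute_of_mem_adjoin_singleton_of_commute hZ
      (Algebra.commute_of_mem_adjoin_self hY).symm).eq
  · rw [hcent, finrank_adjoin_singleton_eq_natDegree_minpoly, hmin]

/-- If the minimal polynomial of an `n × n` matrix `X` has degree `n`, then every matrix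
commuting with `X` is a polynomial in `X`, and the commutant of `X` is a commutative
subalgebra of `M_n(k)` of dimension `n`. -/
theorem commutant_of_minpoly_natDegree_eq
    (k : Type*) [Field k] (n : ℕ) (hn : 1 ≤ n)
    (X : Matrix (Fin n) (Fin n) k) (hmin : (minpoly k X).natDegree = n) :
    (∀ Y : Matrix (Fin n) (Fin n) k, X * Y = Y * X →
      ∃ q : Polynomial k, Y = Polynomial.aeval X q) ∧
    (∀ Y ∈ Subalgebra.centralizer k ({X} : Set (Matrix (Fin n) (Fin n) k)),
      ∀ Z ∈ Subalgebra.centralizer k ({X} : Set (Matrix (Fin n) (Fin n) k)), Y * Z = Z * Y) ∧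
    Module.finrank k (Subalgebra.centralizer k ({X} : Set (Matrix (Fin n) (Fin n) k))) = n :=
  commutant_of_minpoly_natDegree_eq_general k n X hmin
end

section
/- Let L be a finite-dimensional Lie algebra over a field k, and let (L_i)_{i ∈ ℤ} be a family of k-subspaces of L forming an internal direct sum decomposition L = ⊕_{i ∈ ℤ} L_i with ⁅L_i, L_j⁆ ⊆ L_{i+j} for all i, j. Let B be a nondegenerate symmetric invariant bilinear form on L such that B(L_i, L_j) = 0 whenever i + j ≠ 0. Suppose e ∈ L_2 and the centraliser C = {x ∈ L : ⁅e, x⁆ = 0} is contained in the sum of the L_i with i ≥ 0. Then for every i ≥ 0 the linear map ad e : L_i → L_{i+2}, x ↦ ⁅e, x⁆, is surjective, and dim_k C = dim_k L_0 + dim_k L_1. -/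
/-!
Via `B`, each `L_{-j}` is the dual of `L_j`, and under these identifications the transpose of
`ad e : L_i → L_{i+2}` is `-ad e : L_{-i-2} → L_{-i}` (invariance of `B`). The latter is
injective because the centraliser has no component of negative degree, so `ad e : L_i → L_{i+2}`
is onto for `i ≥ 0`. Hence `ad e` maps `L_{≥0}` onto `L_{≥2}`, and its kernel there is the whole
centraliser, so `dim C = dim L_{≥0} - dim L_{≥2} = dim L_0 + dim L_1`.
-/

open Module Function

theorem LinearMap.surjective_of_injective_adjoint {k V W V' W' : Type*} [Field k]
    [AddCommGroup V] [Module k V] [AddCommGroup W] [Module k W]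
    [AddCommGroup V'] [Module k V'] [AddCommGroup W'] [Module k W']
    (f : V →ₗ[k] W) (g : W' →ₗ[k] V') (P : W' →ₗ[k] W →ₗ[k] k)
    (Q : V' →ₗ[k] V →ₗ[k] k)
    (hP : Surjective P) (hQ : Injective Q) (hg : Injective g)
    (hfg : ∀ w v, P w (f v) = Q (g w) v) : Surjective f := by
  have hcomm : f.dualMap ∘ₗ P = Q ∘ₗ g := by ext w v; exact hfg w v
  rw [← LinearMap.dualMap_injective_iff]
  refine Injective.of_comp_right (g := P) ?_ hP
  rw [← LinearMap.coe_comp, hcomm, LinearMap.coe_comp]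
  exact hQ.comp hg

theorem Submodule.finrank_map_add_finrank_ker {k V W : Type*} [Field k]
    [AddCommGroup V] [Module k V] [AddCommGroup W] [Module k W] [FiniteDimensional k V]
    (f : V →ₗ[k] W) {p : Submodule k V} (hp : LinearMap.ker f ≤ p) :
    finrank k (p.map f) + finrank k (LinearMap.ker f) = finrank k p := by
  have h := (f ∘ₗ p.subtype).finrank_range_add_finrank_ker
  rwa [LinearMap.range_comp, Submodule.range_subtype, LinearMap.ker_comp,
    (Submodule.comapSubtypeEquivOfLe hp).finrank_eq] at h

theorem iSup_ge_add_right {α : Type*} [CompleteLattice α] (f : ℤ → α) (a c : ℤ) :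
    ⨆ i ≥ a, f (i + c) = ⨆ j ≥ a + c, f j :=
  le_antisymm (iSup₂_le fun i hi => le_iSup₂_of_le (i + c) (by omega) le_rfl)
    (iSup₂_le fun j hj => le_iSup₂_of_le (j - c) (by omega) (by rw [sub_add_cancel]))

theorem iSupIndep.finrank_iSup_ge {k L : Type*} [Field k] [AddCommGroup L] [Module k L]
    [FiniteDimensional k L] {Lgr : ℤ → Submodule k L} (h : iSupIndep Lgr) (a : ℤ) :
    finrank k ↥(⨆ i ≥ a, Lgr i) =
      finrank k (Lgr a) + finrank k ↥(⨆ i ≥ a + 1, Lgr i) := by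
  have hsplit : ⨆ i ≥ a, Lgr i = Lgr a ⊔ ⨆ i ≥ a + 1, Lgr i := by
    refine le_antisymm (iSup₂_le fun i hi => ?_) (sup_le (le_iSup₂_of_le a le_rfl le_rfl)
      (iSup₂_le fun i hi => le_iSup₂_of_le i (by omega) le_rfl))
    rcases hi.eq_or_lt with rfl | _
    · exact le_sup_left
    · exact le_sup_of_le_right (le_iSup₂_of_le i (by omega) le_rfl)
  have hdisj : Disjoint (Lgr a) (⨆ i ≥ a + 1, Lgr i) :=
    h.disjoint_biSup (y := Set.Ici (a + 1)) (by simp)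
  have := Submodule.finrank_sup_add_finrank_inf_eq (Lgr a) (⨆ i ≥ a + 1, Lgr i)
  rwa [hdisj.eq_bot, finrank_bot, add_zero, ← hsplit] at this

theorem Submodule.map_iSup_ge_eq_of_map_eq {R M N : Type*} [Semiring R] [AddCommMonoid M]
    [Module R M] [AddCommMonoid N] [Module R N] (f : M →ₗ[R] N) {p : ℤ → Submodule R M}
    {q : ℤ → Submodule R N} {a d : ℤ} (h : ∀ i ≥ a, (p i).map f = q (i + d)) :
    (⨆ i ≥ a, p i).map f = ⨆ j ≥ a + d, q j := by
  simp only [Submodule.map_iSup]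
  rw [← iSup_ge_add_right]
  exact iSup_congr fun i => iSup_congr (h i)

theorem iSupIndep.eq_zero_of_mem_of_mem_iSup_ge {R M : Type*} [Semiring R] [AddCommMonoid M]
    [Module R M] {p : ℤ → Submodule R M} (h : iSupIndep p) {a j : ℤ} (hj : j < a) {x : M}
    (hx : x ∈ p j) (hx' : x ∈ ⨆ i ≥ a, p i) : x = 0 :=
  Submodule.disjoint_def.mp (h.disjoint_biSup (y := Set.Ici a) (by simpa using hj)) x hx hx'

section GradedPairing

variable {k L : Type*} [Field k] [AddCommGroup L] [Module k L] {Lgr : ℤ → Submodule k L}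
  {B : L →ₗ[k] L →ₗ[k] k}

theorem DirectSum.IsInternal.injective_compl₁₂_of_add_eq_zero
    (hint : DirectSum.IsInternal Lgr) (hB : B.SeparatingLeft)
    (horth : ∀ i j : ℤ, i + j ≠ 0 → ∀ x ∈ Lgr i, ∀ y ∈ Lgr j, B x y = 0)
    {i j : ℤ} (hij : i + j = 0) : Injective (B.compl₁₂ (Lgr i).subtype (Lgr j).subtype) := by
  rw [← LinearMap.ker_eq_bot, LinearMap.ker_eq_bot']
  intro x hx
  have hker : ⨆ m, Lgr m ≤ LinearMap.ker (B x) := iSup_le fun m y hy => by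
    by_cases hm : m = j
    · subst hm
      exact LinearMap.congr_fun hx ⟨y, hy⟩
    · exact horth i m (by omega) x x.2 y hy
  rw [hint.submodule_iSup_eq_top, top_le_iff, LinearMap.ker_eq_top] at hker
  exact Subtype.ext (hB x fun y => by rw [hker, LinearMap.zero_apply])

theorem DirectSum.IsInternal.surjective_compl₁₂_of_add_eq_zero [FiniteDimensional k L]
    (hint : DirectSum.IsInternal Lgr) (hB : B.SeparatingLeft)
    (horth : ∀ i j : ℤ, i + j ≠ 0 → ∀ x ∈ Lgr i, ∀ y ∈ Lgr j, B x y = 0)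
    {i j : ℤ} (hij : i + j = 0) : Surjective (B.compl₁₂ (Lgr i).subtype (Lgr j).subtype) := by
  have hle : ∀ i j : ℤ, i + j = 0 → finrank k (Lgr i) ≤ finrank k (Lgr j) := fun i j hij => by
    simpa only [Subspace.dual_finrank_eq] using LinearMap.finrank_le_finrank_of_injective
      (hint.injective_compl₁₂_of_add_eq_zero hB horth hij)
  have hdim : finrank k (Lgr i) = finrank k (Dual k (Lgr j)) := by
    rw [Subspace.dual_finrank_eq]
    exact le_antisymm (hle i j hij) (hle j i (by omega))
  exact (LinearMap.injective_iff_surjective_of_finrank_eq_finrank hdim).mp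
    (hint.injective_compl₁₂_of_add_eq_zero hB horth hij)

end GradedPairing

section Lie

variable {k L : Type*} [Field k] [LieRing L] [LieAlgebra k L] {Lgr : ℤ → Submodule k L}

theorem map_ad_eq_of_nonneg [FiniteDimensional k L] (hint : DirectSum.IsInternal Lgr)
    (B : L →ₗ[k] L →ₗ[k] k) (hinv : ∀ x y z : L, B ⁅x, y⁆ z = B x ⁅y, z⁆)
    (hB : B.SeparatingLeft)
    (horth : ∀ i j : ℤ, i + j ≠ 0 → ∀ x ∈ Lgr i, ∀ y ∈ Lgr j, B x y = 0)
    {e : L} {d : ℤ} (hd : 0 < d) (hdeg : ∀ j, ∀ x ∈ Lgr j, ⁅e, x⁆ ∈ Lgr (d + j))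
    (hC : ∀ x : L, ⁅e, x⁆ = 0 → x ∈ ⨆ i ≥ (0 : ℤ), Lgr i) {i : ℤ} (hi : 0 ≤ i) :
    (Lgr i).map (LieAlgebra.ad k L e) = Lgr (i + d) := by
  have hmaps : ∀ j j', d + j = j' → ∀ x ∈ Lgr j, ⁅e, x⁆ ∈ Lgr j' := by
    rintro j _ rfl x hx
    exact hdeg j x hx
  let f := (LieAlgebra.ad k L e).restrict (hmaps i (i + d) (add_comm d i))
  let g := (-LieAlgebra.ad k L e).restrict (p := Lgr (-(i + d))) (q := Lgr (-i))
    fun x hx => neg_mem (hmaps _ _ (by ring) x hx)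
  have hg : Injective g := by
    rw [← LinearMap.ker_eq_bot, LinearMap.ker_eq_bot']
    intro z hz
    have hez : ⁅e, (z : L)⁆ = 0 := neg_eq_zero.mp (congrArg Subtype.val hz)
    exact Subtype.ext (hint.submodule_iSupIndep.eq_zero_of_mem_of_mem_iSup_ge (by omega) z.2
      (hC z hez))
  have hf : Surjective f := LinearMap.surjective_of_injective_adjoint f g _ _
    (hint.surjective_compl₁₂_of_add_eq_zero hB horth (by ring))
    (hint.injective_compl₁₂_of_add_eq_zero hB horth (by ring)) hg
    fun w v => show B w ⁅e, (v : L)⁆ = B (-⁅e, (w : L)⁆) v by rw [lie_skew, hinv]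
  refine le_antisymm (Submodule.map_le_iff_le_comap.mpr fun x hx => (f ⟨x, hx⟩).2)
    fun y hy => ?_
  obtain ⟨x, hx⟩ := hf ⟨y, hy⟩
  exact ⟨x, x.2, congrArg Subtype.val hx⟩

end Lie

theorem surjective_ad_and_finrank_centralizer_of_graded_general
    (k : Type*) [Field k] (L : Type*) [LieRing L] [LieAlgebra k L] [Module.Finite k L]
    (Lgr : ℤ → Submodule k L)
    (hint : DirectSum.IsInternal Lgr)
    (hbr : ∀ i j : ℤ, ∀ x ∈ Lgr i, ∀ y ∈ Lgr j, ⁅x, y⁆ ∈ Lgr (i + j))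
    (B : L →ₗ[k] L →ₗ[k] k)
    (hinv : ∀ x y z : L, B ⁅x, y⁆ z = B x ⁅y, z⁆)
    (hnd : ∀ x : L, (∀ y : L, B x y = 0) → x = 0)
    (horth : ∀ i j : ℤ, i + j ≠ 0 → ∀ x ∈ Lgr i, ∀ y ∈ Lgr j, B x y = 0)
    (e : L) (he : e ∈ Lgr 2)
    (hC : ∀ x : L, ⁅e, x⁆ = 0 → x ∈ ⨆ i ≥ (0 : ℤ), Lgr i) :
    (∀ i : ℤ, 0 ≤ i → ∀ y ∈ Lgr (i + 2), ∃ x ∈ Lgr i, ⁅e, x⁆ = y) ∧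
    Module.finrank k (LinearMap.ker (LieAlgebra.ad k L e)) =
      Module.finrank k (Lgr 0) + Module.finrank k (Lgr 1) := by
  have hmap : ∀ i ≥ (0 : ℤ), (Lgr i).map (LieAlgebra.ad k L e) = Lgr (i + 2) := fun i hi =>
    map_ad_eq_of_nonneg hint B hinv hnd horth two_pos (fun j => hbr 2 j e he) hC hi
  refine ⟨fun i hi y hy => by rwa [← hmap i hi, Submodule.mem_map] at hy, ?_⟩
  have hrank := Submodule.finrank_map_add_finrank_ker (LieAlgebra.ad k L e)
    (p := ⨆ i ≥ (0 : ℤ), Lgr i) fun x hx => hC x hx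
  rw [Submodule.map_iSup_ge_eq_of_map_eq _ hmap, zero_add] at hrank
  have h0 := hint.submodule_iSupIndep.finrank_iSup_ge 0
  have h1 := hint.submodule_iSupIndep.finrank_iSup_ge 1
  rw [zero_add] at h0
  rw [one_add_one_eq_two] at h1
  omega

/-- Key lemma on odd gradings: if `L = ⊕ L_i` is a ℤ-graded finite-dimensional Lie algebra
with a nondegenerate symmetric invariant form pairing `L_i` with `L_{-i}`, and `e ∈ L_2`
has centraliser contained in `⊕_{i ≥ 0} L_i`, then `ad e : L_i → L_{i+2}` is surjective for
all `i ≥ 0` and the centraliser of `e` has dimension `dim L_0 + dim L_1`. -/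
theorem surjective_ad_and_finrank_centralizer_of_graded
    (k : Type*) [Field k] (L : Type*) [LieRing L] [LieAlgebra k L] [Module.Finite k L]
    (Lgr : ℤ → Submodule k L)
    (hint : DirectSum.IsInternal Lgr)
    (hbr : ∀ i j : ℤ, ∀ x ∈ Lgr i, ∀ y ∈ Lgr j, ⁅x, y⁆ ∈ Lgr (i + j))
    (B : L →ₗ[k] L →ₗ[k] k)
    (hsymm : ∀ x y : L, B x y = B y x)
    (hinv : ∀ x y z : L, B ⁅x, y⁆ z = B x ⁅y, z⁆)
    (hnd : ∀ x : L, (∀ y : L, B x y = 0) → x = 0)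
    (horth : ∀ i j : ℤ, i + j ≠ 0 → ∀ x ∈ Lgr i, ∀ y ∈ Lgr j, B x y = 0)
    (e : L) (he : e ∈ Lgr 2)
    (hC : ∀ x : L, ⁅e, x⁆ = 0 → x ∈ ⨆ i ≥ (0 : ℤ), Lgr i) :
    (∀ i : ℤ, 0 ≤ i → ∀ y ∈ Lgr (i + 2), ∃ x ∈ Lgr i, ⁅e, x⁆ = y) ∧
    Module.finrank k (LinearMap.ker (LieAlgebra.ad k L e)) =
      Module.finrank k (Lgr 0) + Module.finrank k (Lgr 1) :=
  surjective_ad_and_finrank_centralizer_of_graded_general k L Lgr hint hbr B hinv hnd horth e he hC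
end

section
/- Let k be a field and V a finite-dimensional k-vector space. Regard V[t] := k[t] ⊗_k V as a module over the polynomial ring k[t], and let ε₀ : V[t] → V be the k-linear evaluation map sending f(t) ⊗ v to f(0)·v. Let M be a k[t]-submodule of V[t] such that the quotient V[t]/M is torsion-free over k[t]. Then M is a free k[t]-module of finite rank, and dim_k ε₀(M) equals the rank of M, which in turn equals dim_{k(t)} of the k(t)-span of the image of M in k(t) ⊗_k V. -/
/-!
Write `ε₀` for evaluation at `t = 0`. Tensoring the exact sequence `k[t] →(t·) k[t] → k` with the
flat module `V` gives `ker ε₀ = t • V[t]`, and torsion-freeness of `V[t] ⧸ M` turns this into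
`M ∩ ker ε₀ = t • M`. As a submodule of a finite free module over a PID, `M` has a finite basis
`b`; then `∑ cᵢ ε₀(bᵢ) = 0` puts `∑ cᵢ bᵢ` in `t • M`, which forces `cᵢ = 0`, so the `ε₀(bᵢ)` form a
basis of `ε₀(M)`. By flatness of `V` again, `V[t] → k(t) ⊗ V` is injective, so the images of `b`
are `k[t]`-, hence `k(t)`-independent, and they span the `k(t)`-span of `M`.
-/

open scoped TensorProduct

/-- Evaluation at `0` of polynomial coefficients: the `k`-linear map
`k[t] ⊗[k] V → V` sending `f ⊗ v` to `f(0) • v`. -/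
noncomputable def evalZeroMap (k V : Type*) [Field k] [AddCommGroup V] [Module k V] :
    Polynomial k ⊗[k] V →ₗ[k] V :=
  TensorProduct.lift ((LinearMap.lsmul k V).comp (Polynomial.lcoeff k 0))

/-- The canonical `k`-linear map `k[t] ⊗[k] V → k(t) ⊗[k] V` induced by the inclusion
`k[t] → k(t)`. -/
noncomputable def polyToRatFuncMap (k V : Type*) [Field k] [AddCommGroup V] [Module k V] :
    Polynomial k ⊗[k] V →ₗ[k] RatFunc k ⊗[k] V :=
  LinearMap.rTensor V
    ((Algebra.linearMap (Polynomial k) (RatFunc k)).restrictScalars k)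

open Polynomial Submodule

section EvalZero

variable {k V : Type*} [Field k] [AddCommGroup V] [Module k V]

lemma evalZeroMap_tmul (p : k[X]) (v : V) : evalZeroMap k V (p ⊗ₜ v) = p.coeff 0 • v := by
  simp [evalZeroMap]

lemma evalZeroMap_smul (p : k[X]) (x : k[X] ⊗[k] V) :
    evalZeroMap k V (p • x) = p.coeff 0 • evalZeroMap k V x := by
  induction x using TensorProduct.induction_on with
  | zero => simp
  | tmul q v => simp [TensorProduct.smul_tmul', evalZeroMap_tmul, mul_coeff_zero, mul_smul]
  | add x y hx hy => simp only [smul_add, map_add, hx, hy]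

lemma evalZeroMap_eq_lid_comp_rTensor :
    evalZeroMap k V = (TensorProduct.lid k V).toLinearMap ∘ₗ (lcoeff k 0).rTensor V :=
  TensorProduct.ext' fun p v => by simp [evalZeroMap_tmul]

lemma exact_mulLeft_X_lcoeff_zero (R : Type*) [CommSemiring R] :
    Function.Exact (LinearMap.mulLeft R (X : R[X])) (lcoeff R 0) := by
  rw [LinearMap.exact_iff]
  ext p
  simpa [eq_comm, dvd_def] using X_dvd_iff.symm

lemma rTensor_mulLeft_X_apply (x : k[X] ⊗[k] V) :
    (LinearMap.mulLeft k (X : k[X])).rTensor V x = (X : k[X]) • x := by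
  induction x using TensorProduct.induction_on with
  | zero => simp
  | tmul q v => simp [TensorProduct.smul_tmul']
  | add x y hx hy => simp only [smul_add, map_add, hx, hy]

lemma evalZeroMap_eq_zero_iff {x : k[X] ⊗[k] V} :
    evalZeroMap k V x = 0 ↔ ∃ y, (X : k[X]) • y = x := by
  have hexact := Module.Flat.rTensor_exact V (exact_mulLeft_X_lcoeff_zero k)
  simp [evalZeroMap_eq_lid_comp_rTensor, hexact x, rTensor_mulLeft_X_apply]

end EvalZero

lemma Submodule.mem_of_smul_mem_of_torsionFree_quotient {R N : Type*} [Ring R] [AddCommGroup N]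
    [Module R N] {M : Submodule R N}
    (htf : ∀ (f : R) (x : N ⧸ M), f • x = 0 → f = 0 ∨ x = 0) {r : R} (hr : r ≠ 0) {y : N}
    (hy : r • y ∈ M) : y ∈ M := by
  rw [← Quotient.mk_eq_zero] at hy ⊢
  rw [Quotient.mk_smul] at hy
  exact (htf r _ hy).resolve_left hr

section Specialization

variable {k V : Type*} [Field k] [AddCommGroup V] [Module k V]
  {M : Submodule k[X] (k[X] ⊗[k] V)} {ι : Type*} [Fintype ι]

lemma linearIndependent_evalZeroMap_basis (hsat : ∀ y, (X : k[X]) • y ∈ M → y ∈ M)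
    (b : Module.Basis ι k[X] M) : LinearIndependent k (fun i ↦ evalZeroMap k V (b i)) := by
  rw [Fintype.linearIndependent_iff]
  intro c hc i
  set x : M := ∑ j, C (c j) • b j
  have hx : evalZeroMap k V x = 0 := by
    simpa [x, evalZeroMap_smul] using hc
  obtain ⟨y, hy⟩ := evalZeroMap_eq_zero_iff.mp hx
  have hyM : y ∈ M := hsat y (hy ▸ x.2)
  have hxy : x = (X : k[X]) • ⟨y, hyM⟩ := Subtype.ext hy.symm
  have hrepr : C (c i) = X * b.repr ⟨y, hyM⟩ i :=
    calc C (c i) = b.repr x i := (congrFun (b.repr_sum_self fun j ↦ C (c j)) i).symm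
      _ = X * b.repr ⟨y, hyM⟩ i := by rw [hxy, map_smul, Finsupp.smul_apply, smul_eq_mul]
  simpa using congrArg (coeff · 0) hrepr

lemma map_evalZeroMap_eq_span_basis (b : Module.Basis ι k[X] M) :
    (M.restrictScalars k).map (evalZeroMap k V) =
      span k (Set.range fun i ↦ evalZeroMap k V (b i)) := by
  apply le_antisymm
  · rintro _ ⟨x, hx, rfl⟩
    obtain ⟨x, rfl⟩ : ∃ x' : M, (x' : k[X] ⊗[k] V) = x := ⟨⟨x, hx⟩, rfl⟩
    rw [← b.sum_repr x]
    simp only [Submodule.coe_sum, Submodule.coe_smul, map_sum, evalZeroMap_smul]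
    exact sum_mem fun i _ ↦ smul_mem _ _ (subset_span ⟨i, rfl⟩)
  · rw [span_le]
    rintro _ ⟨i, rfl⟩
    exact ⟨b i, (b i).2, rfl⟩

lemma finrank_map_evalZeroMap (hsat : ∀ y, (X : k[X]) • y ∈ M → y ∈ M)
    [Module.Free k[X] M] [Module.Finite k[X] M] :
    Module.finrank k ((M.restrictScalars k).map (evalZeroMap k V)) = Module.finrank k[X] M := by
  let b := Module.finBasis k[X] M
  rw [map_evalZeroMap_eq_span_basis b,
    finrank_span_eq_card (linearIndependent_evalZeroMap_basis hsat b), Fintype.card_fin]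

end Specialization

section GenericFibre

variable {k V : Type*} [Field k] [AddCommGroup V] [Module k V]

variable (k V) in
noncomputable def polyToRatFuncLinearMap : k[X] ⊗[k] V →ₗ[k[X]] RatFunc k ⊗[k] V :=
  TensorProduct.AlgebraTensorModule.rTensor k V (Algebra.linearMap k[X] (RatFunc k))

lemma coe_polyToRatFuncLinearMap : ⇑(polyToRatFuncLinearMap k V) = polyToRatFuncMap k V := rfl

lemma polyToRatFuncMap_injective : Function.Injective (polyToRatFuncMap k V) :=
  Module.Flat.rTensor_preserves_injective_linearMap _
    (IsFractionRing.injective k[X] (RatFunc k))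

variable {M : Submodule k[X] (k[X] ⊗[k] V)} {ι : Type*}

lemma linearIndependent_polyToRatFuncMap_basis (b : Module.Basis ι k[X] M) :
    LinearIndependent (RatFunc k) (fun i ↦ polyToRatFuncMap k V (b i)) := by
  have hinj : Function.Injective (polyToRatFuncLinearMap k V ∘ₗ M.subtype) := by
    rw [LinearMap.coe_comp, coe_polyToRatFuncLinearMap, Submodule.coe_subtype]
    exact polyToRatFuncMap_injective.comp Subtype.val_injective
  have hindep : LinearIndependent k[X] ((polyToRatFuncLinearMap k V ∘ₗ M.subtype) ∘ b) :=
    b.linearIndependent.map_injOn _ hinj.injOn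
  exact (LinearIndependent.iff_fractionRing k[X] (RatFunc k)).mp hindep

lemma span_image_polyToRatFuncMap_eq_span_basis (b : Module.Basis ι k[X] M) :
    span (RatFunc k) (polyToRatFuncMap k V '' M) =
      span (RatFunc k) (Set.range fun i ↦ polyToRatFuncMap k V (b i)) := by
  symm
  have hmap : M.map (polyToRatFuncLinearMap k V) =
      span k[X] (Set.range fun i ↦ polyToRatFuncMap k V (b i)) := by
    conv_lhs =>
      rw [← M.map_subtype_top, ← b.span_eq, ← Submodule.map_comp, map_span, ← Set.range_comp]
    rfl
  rw [← span_span_of_tower k[X], ← hmap, map_coe, coe_polyToRatFuncLinearMap]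

lemma finrank_span_image_polyToRatFuncMap [Module.Free k[X] M] [Module.Finite k[X] M] :
    Module.finrank (RatFunc k) (span (RatFunc k) (polyToRatFuncMap k V '' M)) =
      Module.finrank k[X] M := by
  let b := Module.finBasis k[X] M
  rw [span_image_polyToRatFuncMap_eq_span_basis b,
    finrank_span_eq_card (linearIndependent_polyToRatFuncMap_basis b), Fintype.card_fin]

end GenericFibre

/-- Specialisation lemma: a `k[t]`-submodule `M` of `k[t] ⊗[k] V` with torsion-free
quotient is free of finite rank, the dimension of its specialisation at `t = 0` equals its
rank, and its rank equals the dimension of its `k(t)`-span in `k(t) ⊗[k] V`. -/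
theorem free_and_finrank_specialization
    (k V : Type*) [Field k] [AddCommGroup V] [Module k V] [FiniteDimensional k V]
    (M : Submodule (Polynomial k) (Polynomial k ⊗[k] V))
    (htf : ∀ (f : Polynomial k) (x : (Polynomial k ⊗[k] V) ⧸ M), f • x = 0 → f = 0 ∨ x = 0) :
    Module.Free (Polynomial k) M ∧ Module.Finite (Polynomial k) M ∧
    Module.finrank k (Submodule.map (evalZeroMap k V) (M.restrictScalars k)) =
      Module.finrank (Polynomial k) M ∧
    Module.finrank (Polynomial k) M =
      Module.finrank (RatFunc k)
        (Submodule.span (RatFunc k) (polyToRatFuncMap k V '' (M : Set (Polynomial k ⊗[k] V)))) := by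
  have hfree : Module.Free k[X] M :=
    .of_basis (basisOfPid (Module.Free.chooseBasis k[X] (k[X] ⊗[k] V)) M).2
  refine ⟨inferInstance, inferInstance,
    finrank_map_evalZeroMap fun y ↦ mem_of_smul_mem_of_torsionFree_quotient htf X_ne_zero,
    finrank_span_image_polyToRatFuncMap.symm⟩
end
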